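/- On ℝ⁴ with coordinates (t,x,y,z) and symplectic form ω = dt∧dy + dx∧dz, the second-order function I₂ = (x₁z₂ − z₁x₂ + y₂)/(t y₁ + x z₁ − z x₁ − y)³ on the 2-jet space of curves (x(t), y(t), z(t)) is invariant under the prolonged action of sp(4,ℝ), i.e., it is annihilated by the second prolongation of every Hamiltonian vector field X_H with H a quadratic polynomial in (t,x,y,z). -/

import Mathlib

open Matrix

noncomputable section

/-- Coordinates on `J²(ℝ⁴,1)`: `(t, x, y, z, x₁, y₁, z₁, x₂, y₂, z₂)`. -/
def I2 : (Fin 10 → ℝ) → ℝ := fun p =>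
  (p 4 * p 9 - p 6 * p 7 + p 8) / (p 0 * p 5 + p 1 * p 6 - p 3 * p 4 - p 2) ^ 3

/-- The second prolongation of the Hamiltonian vector field `X_H = ω⁻¹dH` of the
general quadratic Hamiltonian
`H = A t² + B x² + C y² + D z² + E tx + F ty + G tz + K xy + L xz + M yz`
with respect to `ω = dt∧dy + dx∧dz`, so that
`X_H = H_y ∂_t + H_z ∂_x − H_t ∂_y − H_x ∂_z`. -/
def XHprol (A B C D E F G K L M : ℝ) : (Fin 10 → ℝ) → (Fin 10 → ℝ) := fun p =>
  -- the linear coefficients of X_H, evaluated at the base point (t,x,y,z):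
  let t := p 0; let x := p 1; let y := p 2; let z := p 3
  let a := F * t + K * x + 2 * C * y + M * z        -- H_y
  let b := G * t + L * x + M * y + 2 * D * z        -- H_z
  let c := -(2 * A * t + E * x + F * y + G * z)     -- −H_t
  let e := -(E * t + 2 * B * x + K * y + L * z)     -- −H_x
  -- total derivatives of the (linear) coefficients:
  let Dta := F + p 4 * K + p 5 * (2 * C) + p 6 * M
  let Dtb := G + p 4 * L + p 5 * M + p 6 * (2 * D)
  let Dtc := -(2 * A) + p 4 * (-E) + p 5 * (-F) + p 6 * (-G)
  let Dte := -E + p 4 * (-(2 * B)) + p 5 * (-K) + p 6 * (-L)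
  let D2a := p 7 * K + p 8 * (2 * C) + p 9 * M
  let D2b := p 7 * L + p 8 * M + p 9 * (2 * D)
  let D2c := p 7 * (-E) + p 8 * (-F) + p 9 * (-G)
  let D2e := p 7 * (-(2 * B)) + p 8 * (-K) + p 9 * (-L)
  ![a, b, c, e,
    Dtb - Dta * p 4, Dtc - Dta * p 5, Dte - Dta * p 6,
    D2b - D2a * p 4 - 2 * Dta * p 7,
    D2c - D2a * p 5 - 2 * Dta * p 8,
    D2e - D2a * p 6 - 2 * Dta * p 9]

/-!
With `γ = (t, x, y, z)`, `γ' = (1, x₁, y₁, z₁)` and `γ'' = (0, x₂, y₂, z₂)`, the denominator of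
`I₂` is `ω(γ, γ')` and its numerator is `ω(γ', γ'')`. A linear symplectic field `X = S` moves
`γ'` by `Sγ' − (D_t a) γ'` and `γ''` by `Sγ'' − (D_t² a) γ' − 2 (D_t a) γ''`, the corrections
coming from the reparametrization of the curve by `t`. Since `S` preserves `ω`, both expressions
are relative invariants, of weights `−D_t a` and `−3 D_t a`, and these weights cancel in
the quotient `ω(γ', γ'') / ω(γ, γ')³`.
-/

open ContinuousLinearMap

section RelativeInvariants

variable {𝕜 E : Type*} [NontriviallyNormedField 𝕜] [NormedAddCommGroup E] [NormedSpace 𝕜 E]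
  {n d : E → 𝕜} {p v : E} {c : 𝕜}

theorem fderiv_div_apply_eq_zero_of_apply_eq_mul (hn : DifferentiableAt 𝕜 n p)
    (hd : DifferentiableAt 𝕜 d p) (hdp : d p ≠ 0) (hnv : fderiv 𝕜 n p v = c * n p)
    (hdv : fderiv 𝕜 d p v = c * d p) :
    fderiv 𝕜 (fun q => n q / d q) p v = 0 := by
  have hinv := (hasFDerivAt_inv hdp).comp p hd.hasFDerivAt
  rw [((hn.hasFDerivAt.mul hinv).congr_of_eventuallyEq
    (Filter.Eventually.of_forall fun q => div_eq_mul_inv _ _)).fderiv]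
  simp only [_root_.add_apply, _root_.smul_apply, ContinuousLinearMap.comp_apply,
    toSpanSingleton_apply, Function.comp_apply, hnv, hdv, smul_eq_mul]
  field_simp
  ring

theorem fderiv_fun_pow_apply_of_apply_eq_mul (k : ℕ) (hd : DifferentiableAt 𝕜 d p)
    (hdv : fderiv 𝕜 d p v = c * d p) :
    fderiv 𝕜 (fun q => d q ^ k) p v = k * c * d p ^ k := by
  rw [fderiv_fun_pow k hd]
  simp only [_root_.smul_apply, hdv, smul_eq_mul, nsmul_eq_mul]
  rcases k with _ | k
  · simp
  · simp only [Nat.add_sub_cancel, pow_succ]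
    ring

end RelativeInvariants

def I2num (p : Fin 10 → ℝ) : ℝ := p 4 * p 9 - p 6 * p 7 + p 8

def I2den (p : Fin 10 → ℝ) : ℝ := p 0 * p 5 + p 1 * p 6 - p 3 * p 4 - p 2

theorem hasFDerivAt_I2num (p : Fin 10 → ℝ) : HasFDerivAt I2num
    (p 4 • .proj 9 + p 9 • .proj 4 - (p 6 • .proj 7 + p 7 • .proj 6) + .proj 8
      : (Fin 10 → ℝ) →L[ℝ] ℝ) p :=
  (((hasFDerivAt_apply 4 p).mul (hasFDerivAt_apply 9 p)).sub
    ((hasFDerivAt_apply 6 p).mul (hasFDerivAt_apply 7 p))).add (hasFDerivAt_apply 8 p)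

theorem hasFDerivAt_I2den (p : Fin 10 → ℝ) : HasFDerivAt I2den
    (p 0 • .proj 5 + p 5 • .proj 0 + (p 1 • .proj 6 + p 6 • .proj 1)
      - (p 3 • .proj 4 + p 4 • .proj 3) - .proj 2 : (Fin 10 → ℝ) →L[ℝ] ℝ) p :=
  ((((hasFDerivAt_apply 0 p).mul (hasFDerivAt_apply 5 p)).add
    ((hasFDerivAt_apply 1 p).mul (hasFDerivAt_apply 6 p))).sub
    ((hasFDerivAt_apply 3 p).mul (hasFDerivAt_apply 4 p))).sub (hasFDerivAt_apply 2 p)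

theorem fderiv_I2num_XHprol (A B C D E F G K L M : ℝ) (p : Fin 10 → ℝ) :
    fderiv ℝ I2num p (XHprol A B C D E F G K L M p) =
      -3 * (F + p 4 * K + p 5 * (2 * C) + p 6 * M) * I2num p := by
  simp only [(hasFDerivAt_I2num p).fderiv, XHprol, I2num, _root_.add_apply, _root_.sub_apply,
    _root_.smul_apply, proj_apply, cons_val, smul_eq_mul]
  ring

theorem fderiv_I2den_XHprol (A B C D E F G K L M : ℝ) (p : Fin 10 → ℝ) :
    fderiv ℝ I2den p (XHprol A B C D E F G K L M p) =
      -(F + p 4 * K + p 5 * (2 * C) + p 6 * M) * I2den p := by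
  simp only [(hasFDerivAt_I2den p).fderiv, XHprol, I2den, _root_.add_apply, _root_.sub_apply,
    _root_.smul_apply, proj_apply, cons_val, cons_val_zero, cons_val_one, smul_eq_mul]
  ring

/-- `I₂` is annihilated by the second prolongation of every Hamiltonian vector
field of a quadratic Hamiltonian. -/
theorem stmt_10 : ∀ (A B C D E F G K L M : ℝ) (p : Fin 10 → ℝ),
    p 0 * p 5 + p 1 * p 6 - p 3 * p 4 - p 2 ≠ 0 →
    fderiv ℝ I2 p (XHprol A B C D E F G K L M p) = 0 := by
  intro A B C D E F G K L M p hp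
  have hnum := (hasFDerivAt_I2num p).differentiableAt
  have hden := (hasFDerivAt_I2den p).differentiableAt
  have hden_pow := fderiv_fun_pow_apply_of_apply_eq_mul 3 hden
    (fderiv_I2den_XHprol A B C D E F G K L M p)
  change fderiv ℝ (fun q => I2num q / I2den q ^ 3) p _ = 0
  refine fderiv_div_apply_eq_zero_of_apply_eq_mul hnum (hden.pow 3) (pow_ne_zero 3 hp)
    ?_ hden_pow
  rw [fderiv_I2num_XHprol]
  push_cast
  ring
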